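/- Let d be a positive integer and let σ_d be the uniform probability measure on the unit sphere of ℂ^d. For all matrices A, B ∈ ℂ^{d×d}, ∫ ⟨v|A|v⟩·⟨v|B|v⟩ dσ_d(v) = (Tr(A)·Tr(B) + Tr(AB)) / (d(d+1)). -/

import Mathlib

open Matrix MeasureTheory

noncomputable section

/-- `⟨v|A|v⟩ = v† A v`. -/
def qexp {d : ℕ} (A : Matrix (Fin d) (Fin d) ℂ) (v : Fin d → ℂ) : ℂ :=
  star v ⬝ᵥ A.mulVec v

/-- Squared ℓ²-norm of a vector of `ℂ^d`. -/
def norm2 {d : ℕ} (v : Fin d → ℂ) : ℝ := ∑ i, Complex.normSq (v i)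

/-- `σ` is the uniform (unitarily invariant) probability measure on the unit sphere of `ℂ^d`,
viewed as a measure on `ℂ^d` supported on the sphere. -/
def IsUniformSphere (d : ℕ) (σ : Measure (Fin d → ℂ)) : Prop :=
  IsProbabilityMeasure σ ∧
  σ {v | norm2 v = 1}ᶜ = 0 ∧
  ∀ U : Matrix (Fin d) (Fin d) ℂ, U ∈ Matrix.unitaryGroup (Fin d) ℂ →
    σ.map (fun v => U.mulVec v) = σ

namespace SphereAux

/-- the basic monomial `conj v_i · v_j · conj v_k · v_l`. -/
def mono {d : ℕ} (i j k l : Fin d) (v : Fin d → ℂ) : ℂ :=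
  (starRingEnd ℂ) (v i) * v j * ((starRingEnd ℂ) (v k) * v l)

variable {d : ℕ}

lemma continuous_mono (i j k l : Fin d) : Continuous (mono i j k l) := by
  unfold mono
  exact ((Complex.continuous_conj.comp (continuous_apply i)).mul (continuous_apply j)).mul
    ((Complex.continuous_conj.comp (continuous_apply k)).mul (continuous_apply l))

variable {σ : Measure (Fin d → ℂ)}

lemma sphere_ae (hσ : IsUniformSphere d σ) : ∀ᵐ v ∂σ, norm2 v = 1 :=
  ae_iff.mpr hσ.2.1

lemma norm_coord_le (v : Fin d → ℂ) (hv : norm2 v = 1) (m : Fin d) : ‖v m‖ ≤ 1 := by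
  have h1 : Complex.normSq (v m) ≤ 1 := by
    rw [← hv]
    exact Finset.single_le_sum (f := fun i => Complex.normSq (v i))
      (fun i _ => Complex.normSq_nonneg _) (Finset.mem_univ m)
  have h2 : ‖v m‖ ^ 2 ≤ 1 := by
    rwa [Complex.sq_norm] at *
  nlinarith [norm_nonneg (v m)]

lemma integrable_mono (hσ : IsUniformSphere d σ) (i j k l : Fin d) :
    Integrable (mono i j k l) σ := by
  haveI : IsProbabilityMeasure σ := hσ.1
  refine ⟨(continuous_mono i j k l).aestronglyMeasurable, ?_⟩
  apply HasFiniteIntegral.of_bounded (C := 1)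
  filter_upwards [sphere_ae hσ] with v hv
  have h1 := norm_coord_le v hv i
  have h2 := norm_coord_le v hv j
  have h3 := norm_coord_le v hv k
  have h4 := norm_coord_le v hv l
  have e : ‖mono i j k l v‖ = ‖v i‖ * ‖v j‖ * (‖v k‖ * ‖v l‖) := by
    simp [mono, norm_mul]
  rw [e]
  have hkl : ‖v k‖ * ‖v l‖ ≤ 1 := mul_le_one₀ h3 (norm_nonneg _) h4
  have hij : ‖v i‖ * ‖v j‖ ≤ 1 := mul_le_one₀ h1 (norm_nonneg _) h2
  exact mul_le_one₀ hij (mul_nonneg (norm_nonneg _) (norm_nonneg _)) hkl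

lemma continuous_mulVec (U : Matrix (Fin d) (Fin d) ℂ) :
    Continuous (fun v : Fin d → ℂ => U.mulVec v) := by
  apply continuous_pi
  intro m
  simp only [Matrix.mulVec, dotProduct]
  exact continuous_finset_sum _ fun j _ => (continuous_const.mul (continuous_apply j))

/-- change of variables by a unitary. -/
lemma M_inv (hσ : IsUniformSphere d σ) (U : Matrix (Fin d) (Fin d) ℂ)
    (hU : U ∈ Matrix.unitaryGroup (Fin d) ℂ) (i j k l : Fin d) :
    ∫ v, mono i j k l v ∂σ = ∫ v, mono i j k l (U.mulVec v) ∂σ := by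
  conv_lhs => rw [← hσ.2.2 U hU]
  rw [integral_map (continuous_mulVec U).aemeasurable
    (continuous_mono i j k l).aestronglyMeasurable]

/-- vanishing of unpaired monomials. -/
lemma M_vanish (hσ : IsUniformSphere d σ) (i j k l : Fin d)
    (h : ¬((i = j ∧ k = l) ∨ (i = l ∧ k = j))) :
    ∫ v, mono i j k l v ∂σ = 0 := by
  classical
  set M := ∫ v, mono i j k l v ∂σ with hM
  by_contra hM0
  -- the phase factor attached to coordinate `m`
  set c : Fin d → Fin d → ℂ := fun m n => if n = m then Complex.I else 1 with hc
  have key : ∀ m : Fin d,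
      (starRingEnd ℂ) (c m i) * c m j * ((starRingEnd ℂ) (c m k) * c m l) = 1 := by
    intro m
    have hD : Matrix.diagonal (c m) ∈ Matrix.unitaryGroup (Fin d) ℂ := by
      rw [Matrix.mem_unitaryGroup_iff]
      rw [Matrix.star_eq_conjTranspose, Matrix.diagonal_conjTranspose,
        Matrix.diagonal_mul_diagonal]
      have h1 : (fun n => c m n * star (c m) n) = fun _ => (1:ℂ) := by
        funext n
        by_cases hn : n = m <;> simp [hc, hn, mul_comm]
      rw [h1]
      exact Matrix.diagonal_one
    have hMs : M = ((starRingEnd ℂ) (c m i) * c m j * ((starRingEnd ℂ) (c m k) * c m l)) * M := by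
      rw [hM]
      conv_rhs => rw [← integral_const_mul]
      conv_lhs => rw [M_inv hσ _ hD]
      congr 1
      funext v
      simp only [mono, Matrix.mulVec_diagonal, _root_.map_mul]
      ring
    have h2 : ((starRingEnd ℂ) (c m i) * c m j * ((starRingEnd ℂ) (c m k) * c m l)) * M
        = 1 * M := by rw [← hMs, one_mul]
    exact mul_right_cancel₀ hM0 h2
  -- now extract pairing from `key`
  apply h
  have hi := key i
  have hk := key k
  simp only [hc] at hi hk
  by_cases hji : j = i <;> by_cases hki : k = i <;> by_cases hli : l = i
  · exact Or.inl ⟨hji.symm, hki.trans hli.symm⟩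
  · exfalso; simp [hji, hki, hli, Complex.ext_iff] at hi
  · exfalso; simp [hji, hki, hli, Complex.ext_iff] at hi
  · by_cases hlk : l = k
    · exact Or.inl ⟨hji.symm, hlk.symm⟩
    · exfalso
      have hik : ¬ i = k := fun hh => hki hh.symm
      have hjk : ¬ j = k := by rw [hji]; exact hik
      simp [hik, hjk, hlk, Complex.ext_iff] at hk
  · exfalso; simp [hji, hki, hli, Complex.ext_iff] at hi
  · exfalso; simp [hji, hki, hli, Complex.ext_iff] at hi; exact absurd hi (by norm_num)
  · by_cases hjk : j = k
    · exact Or.inr ⟨hli.symm, hjk.symm⟩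
    · exfalso
      have hik : ¬ i = k := fun hh => hki hh.symm
      have hlk : ¬ l = k := by rw [hli]; exact hik
      simp [hik, hjk, hlk, Complex.ext_iff] at hk
  · exfalso; simp [hji, hki, hli, Complex.ext_iff] at hi

/-- permutation invariance. -/
lemma M_perm (hσ : IsUniformSphere d σ) (e : Equiv.Perm (Fin d)) (i j k l : Fin d) :
    ∫ v, mono i j k l v ∂σ = ∫ v, mono (e i) (e j) (e k) (e l) v ∂σ := by
  classical
  set U : Matrix (Fin d) (Fin d) ℂ := Matrix.of fun m n => if e m = n then 1 else 0 with hUdef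
  have hmv : ∀ v : Fin d → ℂ, U.mulVec v = fun m => v (e m) := by
    intro v; funext m
    simp [hUdef, Matrix.mulVec, dotProduct, ite_mul]
  have hU : U ∈ Matrix.unitaryGroup (Fin d) ℂ := by
    rw [Matrix.mem_unitaryGroup_iff]
    ext m n
    simp only [Matrix.mul_apply, Matrix.star_apply, hUdef, Matrix.of_apply, Matrix.one_apply,
      apply_ite (star : ℂ → ℂ), star_one, star_zero, ite_mul, one_mul, zero_mul,
      mul_ite, mul_one, mul_zero]
    rw [Finset.sum_ite_eq Finset.univ (e n) (fun p => if e m = p then (1:ℂ) else 0)]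
    simp [EmbeddingLike.apply_eq_iff_eq, eq_comm]
  rw [M_inv hσ U hU]
  simp only [hmv, mono]

lemma mono_ikki (i k : Fin d) : mono i k k i = mono i i k k := by
  funext v; simp only [mono]; ring

lemma star_std (a b : Fin d) :
    star (Matrix.single a b (1:ℂ)) = Matrix.single b a 1 := by
  ext m n
  simp [Matrix.star_apply, Matrix.single, apply_ite (star : ℂ → ℂ), and_comm]

/-- Hadamard rotation : fourth moment is twice the mixed moment. -/
lemma M_had (hσ : IsUniformSphere d σ) (i k : Fin d) (hik : i ≠ k) :
    ∫ v, mono i i i i v ∂σ = 2 * ∫ v, mono i i k k v ∂σ := by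
  classical
  set r : ℂ := ((Real.sqrt 2 : ℝ) : ℂ)⁻¹ with hr
  have hr2 : r * r = 2⁻¹ := by
    rw [hr, ← mul_inv, ← Complex.ofReal_mul,
      Real.mul_self_sqrt (by norm_num : (0:ℝ) ≤ 2)]
    norm_num
  have hrstar : (starRingEnd ℂ) r = r := by
    rw [hr, map_inv₀, Complex.conj_ofReal]
  set S : Matrix (Fin d) (Fin d) ℂ :=
    Matrix.single i i 1 + Matrix.single i k 1 + Matrix.single k i 1
      - Matrix.single k k 1 with hS
  set P : Matrix (Fin d) (Fin d) ℂ :=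
    Matrix.single i i 1 + Matrix.single k k 1 with hP
  set R : Matrix (Fin d) (Fin d) ℂ := 1 + r • S - P with hR
  have hSS : S * S = P + P := by
    simp only [hS, hP, Matrix.add_mul, Matrix.mul_add, Matrix.sub_mul, Matrix.mul_sub,
      Matrix.single_mul_single_same, Matrix.single_mul_single_of_ne, hik,
      hik.symm, ne_eq, not_false_eq_true, one_mul]
    abel
  have hSP : S * P = S := by
    simp only [hS, hP, Matrix.add_mul, Matrix.mul_add, Matrix.sub_mul, Matrix.mul_sub,
      Matrix.single_mul_single_same, Matrix.single_mul_single_of_ne, hik,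
      hik.symm, ne_eq, not_false_eq_true, one_mul]
    abel
  have hPS : P * S = S := by
    simp only [hS, hP, Matrix.add_mul, Matrix.mul_add, Matrix.sub_mul, Matrix.mul_sub,
      Matrix.single_mul_single_same, Matrix.single_mul_single_of_ne, hik,
      hik.symm, ne_eq, not_false_eq_true, one_mul]
    abel
  have hPP : P * P = P := by
    simp only [hS, hP, Matrix.add_mul, Matrix.mul_add,
      Matrix.single_mul_single_same, Matrix.single_mul_single_of_ne, hik,
      hik.symm, ne_eq, not_false_eq_true, one_mul]
    abel
  have hrstar' : star r = r := hrstar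
  have hRstar : star R = R := by
    rw [hR, hS, hP]
    simp only [star_sub, star_add, star_one, star_smul, star_std, hrstar']
    module
  have hRU : R ∈ Matrix.unitaryGroup (Fin d) ℂ := by
    rw [Matrix.mem_unitaryGroup_iff, hRstar, hR]
    simp only [Matrix.add_mul, Matrix.mul_add, Matrix.sub_mul, Matrix.mul_sub, Matrix.one_mul,
      Matrix.mul_one, Matrix.smul_mul, Matrix.mul_smul, smul_smul, hSS, hSP, hPS, hPP, hr2]
    have hr2' : r ^ 2 * 2 = 1 := by rw [sq, hr2]; norm_num
    match_scalars
    all_goals (try ring1)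
    all_goals linear_combination hr2'
  have hRv : ∀ v : Fin d → ℂ, (R.mulVec v) i = r * (v i + v k) := by
    intro v
    rw [hR, Matrix.sub_mulVec, Matrix.add_mulVec, Matrix.one_mulVec, Matrix.smul_mulVec,
      hS, hP]
    simp only [Matrix.add_mulVec, Matrix.sub_mulVec, Matrix.single_mulVec, one_mul]
    simp [Function.update_apply, hik, hik.symm]
  set g : Fin 2 → Fin d := ![i, k] with hg
  have hpt : ∀ v : Fin d → ℂ, mono i i i i (R.mulVec v) =
      ∑ q : Fin 2 × Fin 2 × Fin 2 × Fin 2,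
        (4:ℂ)⁻¹ * mono (g q.1) (g q.2.1) (g q.2.2.1) (g q.2.2.2) v := by
    intro v
    have h4 : (4:ℂ)⁻¹ = (r * r) * (r * r) := by rw [hr2]; norm_num
    simp only [Fintype.sum_prod_type, Fin.sum_univ_two, hg, Matrix.cons_val_zero,
      Matrix.cons_val_one, Matrix.head_cons, h4, mono, hRv, _root_.map_mul, map_add, hrstar]
    ring
  have hiter : ∫ v, mono i i i i v ∂σ =
      ∑ q : Fin 2 × Fin 2 × Fin 2 × Fin 2,
        (4:ℂ)⁻¹ * ∫ v, mono (g q.1) (g q.2.1) (g q.2.2.1) (g q.2.2.2) v ∂σ := by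
    rw [M_inv hσ R hRU i i i i]
    rw [show (fun v => mono i i i i (R.mulVec v)) = fun v =>
      ∑ q : Fin 2 × Fin 2 × Fin 2 × Fin 2,
        (4:ℂ)⁻¹ * mono (g q.1) (g q.2.1) (g q.2.2.1) (g q.2.2.2) v from funext hpt]
    rw [integral_finset_sum _ (fun q _ => (integrable_mono hσ _ _ _ _).const_mul _)]
    exact Finset.sum_congr rfl fun q _ => integral_const_mul _ _
  have hswap : ∀ a b c e : Fin d, ∫ v, mono a b c e v ∂σ =
      ∫ v, mono (Equiv.swap i k a) (Equiv.swap i k b) (Equiv.swap i k c) (Equiv.swap i k e) v ∂σ :=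
    fun a b c e => M_perm hσ (Equiv.swap i k) a b c e
  have e1 : ∫ v, mono k k k k v ∂σ = ∫ v, mono i i i i v ∂σ := by
    rw [hswap i i i i]; simp [Equiv.swap_apply_left]
  have e2 : ∫ v, mono k k i i v ∂σ = ∫ v, mono i i k k v ∂σ := by
    rw [hswap i i k k]; simp [Equiv.swap_apply_left, Equiv.swap_apply_right]
  have e3 : ∫ v, mono i k k i v ∂σ = ∫ v, mono i i k k v ∂σ := by rw [mono_ikki]
  have e4 : ∫ v, mono k i i k v ∂σ = ∫ v, mono i i k k v ∂σ := by rw [mono_ikki]; exact e2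
  have hv1 : ∫ v, mono i i i k v ∂σ = 0 := M_vanish hσ _ _ _ _ (by simp [hik, hik.symm])
  have hv2 : ∫ v, mono i i k i v ∂σ = 0 := M_vanish hσ _ _ _ _ (by simp [hik, hik.symm])
  have hv3 : ∫ v, mono i k i i v ∂σ = 0 := M_vanish hσ _ _ _ _ (by simp [hik, hik.symm])
  have hv4 : ∫ v, mono k i i i v ∂σ = 0 := M_vanish hσ _ _ _ _ (by simp [hik, hik.symm])
  have hv5 : ∫ v, mono k k k i v ∂σ = 0 := M_vanish hσ _ _ _ _ (by simp [hik, hik.symm])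
  have hv6 : ∫ v, mono k k i k v ∂σ = 0 := M_vanish hσ _ _ _ _ (by simp [hik, hik.symm])
  have hv7 : ∫ v, mono k i k k v ∂σ = 0 := M_vanish hσ _ _ _ _ (by simp [hik, hik.symm])
  have hv8 : ∫ v, mono i k k k v ∂σ = 0 := M_vanish hσ _ _ _ _ (by simp [hik, hik.symm])
  have hv9 : ∫ v, mono i k i k v ∂σ = 0 := M_vanish hσ _ _ _ _ (by simp [hik, hik.symm])
  have hv10 : ∫ v, mono k i k i v ∂σ = 0 := M_vanish hσ _ _ _ _ (by simp [hik, hik.symm])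
  rw [Fintype.sum_prod_type] at hiter
  simp only [Fintype.sum_prod_type, Fin.sum_univ_two, hg, Matrix.cons_val_zero,
    Matrix.cons_val_one, Matrix.head_cons] at hiter
  rw [hv1, hv2, hv3, hv4, hv5, hv6, hv7, hv8, hv9, hv10, e1, e2, e3, e4] at hiter
  linear_combination 2 * hiter

/-- normalization. -/
lemma M_norm (hσ : IsUniformSphere d σ) :
    ∑ p : Fin d × Fin d, ∫ v, mono p.1 p.1 p.2 p.2 v ∂σ = 1 := by
  haveI : IsProbabilityMeasure σ := hσ.1
  rw [← integral_finset_sum _ (fun p _ => integrable_mono hσ p.1 p.1 p.2 p.2)]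
  have hone : ∀ᵐ v ∂σ, (∑ p : Fin d × Fin d, mono p.1 p.1 p.2 p.2 v) = 1 := by
    filter_upwards [sphere_ae hσ] with v hv
    have h1 : (∑ i, (starRingEnd ℂ) (v i) * v i) = 1 := by
      have h2 : ∀ i : Fin d, (starRingEnd ℂ) (v i) * v i = ((Complex.normSq (v i) : ℝ) : ℂ) := by
        intro i; rw [mul_comm, Complex.mul_conj]
      rw [Finset.sum_congr rfl (fun i _ => h2 i), ← Complex.ofReal_sum]
      have h3 : (∑ i, Complex.normSq (v i)) = 1 := hv
      rw [h3, Complex.ofReal_one]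
    calc ∑ p : Fin d × Fin d, mono p.1 p.1 p.2 p.2 v
        = (∑ i, (starRingEnd ℂ) (v i) * v i) * (∑ i, (starRingEnd ℂ) (v i) * v i) := by
          rw [Fintype.sum_mul_sum, Fintype.sum_prod_type]; rfl
      _ = 1 := by rw [h1, one_mul]
  rw [integral_congr_ae hone]
  simp

end SphereAux

open SphereAux

/-- Second-moment formula for the uniform measure on the unit sphere of `ℂ^d`:
`∫ ⟨v|A|v⟩⟨v|B|v⟩ dσ(v) = (Tr A · Tr B + Tr(AB)) / (d(d+1))`. -/
theorem sphere_second_moment (d : ℕ) (hd : 0 < d)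
    (σ : Measure (Fin d → ℂ)) (hσ : IsUniformSphere d σ)
    (A B : Matrix (Fin d) (Fin d) ℂ) :
    ∫ v, qexp A v * qexp B v ∂σ =
      (A.trace * B.trace + (A * B).trace) / ((d : ℂ) * ((d : ℂ) + 1)) := by
  classical
  haveI : IsProbabilityMeasure σ := hσ.1
  set b : ℂ := ((d : ℂ) * ((d : ℂ) + 1))⁻¹ with hb
  have hdc : (d : ℂ) ≠ 0 := Nat.cast_ne_zero.mpr hd.ne'
  set i0 : Fin d := ⟨0, hd⟩ with hi0
  have ha_all : ∀ i : Fin d, ∫ v, mono i i i i v ∂σ = ∫ v, mono i0 i0 i0 i0 v ∂σ := by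
    intro i
    have h := M_perm hσ (Equiv.swap i i0) i i i i
    rwa [Equiv.swap_apply_left] at h
  have hb_all : ∀ i k i' k' : Fin d, i ≠ k → i' ≠ k' →
      ∫ v, mono i i k k v ∂σ = ∫ v, mono i' i' k' k' v ∂σ := by
    intro i k i' k' hik hik'
    have h1 : Equiv.swap i i' i = i' := Equiv.swap_apply_left _ _
    have h2 : (Equiv.trans (Equiv.swap i i') (Equiv.swap (Equiv.swap i i' k) k')) i = i' := by
      rw [Equiv.trans_apply, h1]
      refine Equiv.swap_apply_of_ne_of_ne ?_ hik'
      intro hh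
      exact hik ((Equiv.swap i i').injective (h1.trans hh))
    have h3 : (Equiv.trans (Equiv.swap i i') (Equiv.swap (Equiv.swap i i' k) k')) k = k' := by
      rw [Equiv.trans_apply]; exact Equiv.swap_apply_left _ _
    have h := M_perm hσ (Equiv.trans (Equiv.swap i i') (Equiv.swap (Equiv.swap i i' k) k')) i i k k
    rwa [h2, h3] at h
  have hnorm := M_norm hσ
  have claims : (∀ i : Fin d, ∫ v, mono i i i i v ∂σ = 2 * b) ∧
      (∀ i k : Fin d, i ≠ k → ∫ v, mono i i k k v ∂σ = b) := by
    by_cases hd2 : ∃ k0 : Fin d, k0 ≠ i0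
    · obtain ⟨k0, hk0⟩ := hd2
      have hikn : i0 ≠ k0 := Ne.symm hk0
      have hHad := M_had hσ i0 k0 hikn
      have hsum : ∀ p : Fin d × Fin d, ∫ v, mono p.1 p.1 p.2 p.2 v ∂σ =
          if p.1 = p.2 then ∫ v, mono i0 i0 i0 i0 v ∂σ else ∫ v, mono i0 i0 k0 k0 v ∂σ := by
        intro p
        by_cases hp : p.1 = p.2
        · rw [if_pos hp, ← hp]; exact ha_all p.1
        · rw [if_neg hp]; exact hb_all _ _ _ _ hp hikn
      rw [Finset.sum_congr rfl (fun p _ => hsum p), Fintype.sum_prod_type] at hnorm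
      have inner : ∀ i : Fin d, (∑ k : Fin d,
          if i = k then ∫ v, mono i0 i0 i0 i0 v ∂σ else ∫ v, mono i0 i0 k0 k0 v ∂σ)
          = (∫ v, mono i0 i0 i0 i0 v ∂σ) + ((d:ℂ) - 1) * ∫ v, mono i0 i0 k0 k0 v ∂σ := by
        intro i
        have h4 : (∑ k : Fin d, if i = k then (∫ v, mono i0 i0 i0 i0 v ∂σ)
              else ∫ v, mono i0 i0 k0 k0 v ∂σ)
            = ∑ k : Fin d, ((∫ v, mono i0 i0 k0 k0 v ∂σ) +
              if i = k then (∫ v, mono i0 i0 i0 i0 v ∂σ) - ∫ v, mono i0 i0 k0 k0 v ∂σ else 0) := by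
          refine Finset.sum_congr rfl fun m _ => ?_
          by_cases h : i = m <;> simp [h]
        rw [h4, Finset.sum_add_distrib, Finset.sum_const, Finset.sum_ite_eq]
        simp [Finset.card_univ, nsmul_eq_mul]
        ring
      rw [Finset.sum_congr rfl (fun i _ => inner i), Finset.sum_const, Finset.card_univ,
        Fintype.card_fin, nsmul_eq_mul] at hnorm
      have hprod : ((d:ℂ) * ((d:ℂ) + 1)) * ∫ v, mono i0 i0 k0 k0 v ∂σ = 1 := by
        linear_combination hnorm - (d:ℂ) * hHad
      have hY : ∫ v, mono i0 i0 k0 k0 v ∂σ = b := by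
        rw [hb]; exact eq_inv_of_mul_eq_one_right hprod
      refine ⟨fun i => ?_, fun i k hik => ?_⟩
      · rw [ha_all i, hHad, hY]
      · rw [hb_all i k i0 k0 hik hikn, hY]
    · push_neg at hd2
      have hd1 : d = 1 := by
        have h1 : Fintype.card (Fin d) ≤ 1 :=
          Fintype.card_le_one_iff.mpr (fun a c => (hd2 a).trans (hd2 c).symm)
        rw [Fintype.card_fin] at h1; omega
      subst hd1
      refine ⟨fun i => ?_, fun i k hik => absurd ((hd2 i).trans (hd2 k).symm) hik⟩
      have hb1 : b = 2⁻¹ := by rw [hb]; norm_num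
      have h1 : ∫ v, mono i0 i0 i0 i0 v ∂σ = 1 := by
        simpa [Fintype.sum_prod_type, hd2] using hnorm
      rw [hd2 i, h1, hb1]
      norm_num
  -- pointwise expansion of the integrand
  have hpt : ∀ v : Fin d → ℂ, qexp A v * qexp B v =
      ∑ p : (Fin d × Fin d) × Fin d × Fin d,
        (A p.1.1 p.1.2 * B p.2.1 p.2.2) * mono p.1.1 p.1.2 p.2.1 p.2.2 v := by
    intro v
    have hA : qexp A v = ∑ p : Fin d × Fin d, A p.1 p.2 * ((starRingEnd ℂ) (v p.1) * v p.2) := by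
      rw [Fintype.sum_prod_type]
      simp only [qexp, dotProduct, Matrix.mulVec, Pi.star_apply]
      refine Finset.sum_congr rfl fun i _ => ?_
      rw [Finset.mul_sum]
      refine Finset.sum_congr rfl fun j _ => ?_
      simp [Complex.star_def]
      ring
    have hB : qexp B v = ∑ p : Fin d × Fin d, B p.1 p.2 * ((starRingEnd ℂ) (v p.1) * v p.2) := by
      rw [Fintype.sum_prod_type]
      simp only [qexp, dotProduct, Matrix.mulVec, Pi.star_apply]
      refine Finset.sum_congr rfl fun i _ => ?_
      rw [Finset.mul_sum]
      refine Finset.sum_congr rfl fun j _ => ?_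
      simp [Complex.star_def]
      ring
    rw [hA, hB, Fintype.sum_mul_sum]
    conv_rhs => rw [Fintype.sum_prod_type]
    refine Finset.sum_congr rfl fun p _ => Finset.sum_congr rfl fun q _ => ?_
    simp only [mono]
    ring
  rw [show (fun v => qexp A v * qexp B v) = fun v =>
      ∑ p : (Fin d × Fin d) × Fin d × Fin d,
        (A p.1.1 p.1.2 * B p.2.1 p.2.2) * mono p.1.1 p.1.2 p.2.1 p.2.2 v from funext hpt]
  rw [integral_finset_sum _ (fun p _ => (integrable_mono hσ _ _ _ _).const_mul _)]
  have hM : ∀ i j k l : Fin d, ∫ v, mono i j k l v ∂σ =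
      (if i = j ∧ k = l then b else 0) + (if i = l ∧ k = j then b else 0) := by
    intro i j k l
    by_cases h1 : i = j ∧ k = l
    · obtain ⟨h1a, h1b⟩ := h1
      subst h1a; subst h1b
      by_cases h2 : i = k
      · subst h2
        rw [claims.1 i]
        simp [two_mul]
      · rw [claims.2 i k h2]
        simp [h2, Ne.symm h2]
    · by_cases h2 : i = l ∧ k = j
      · obtain ⟨h2a, h2b⟩ := h2
        subst h2a; subst h2b
        have hik : i ≠ k := fun hh => h1 ⟨hh, hh.symm⟩
        rw [mono_ikki, claims.2 i k hik]
        simp [hik, Ne.symm hik]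
      · rw [M_vanish hσ i j k l (by tauto)]
        simp [h1, h2]
  calc ∑ p : (Fin d × Fin d) × Fin d × Fin d,
        ∫ v, (A p.1.1 p.1.2 * B p.2.1 p.2.2) * mono p.1.1 p.1.2 p.2.1 p.2.2 v ∂σ
      = ∑ p : (Fin d × Fin d) × Fin d × Fin d, (A p.1.1 p.1.2 * B p.2.1 p.2.2) *
          ((if p.1.1 = p.1.2 ∧ p.2.1 = p.2.2 then b else 0) +
           (if p.1.1 = p.2.2 ∧ p.2.1 = p.1.2 then b else 0)) := by
        refine Finset.sum_congr rfl fun p _ => ?_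
        rw [integral_const_mul, hM]
    _ = (A.trace * B.trace + (A * B).trace) * b := by
        simp only [Fintype.sum_prod_type, mul_add, Finset.sum_add_distrib, ite_and, mul_ite,
          mul_zero, Finset.sum_ite_irrel, Finset.sum_const_zero, Finset.sum_ite_eq,
          Finset.sum_ite_eq', Finset.mem_univ, if_true]
        have t1 : (A.trace * B.trace) * b = ∑ x : Fin d, ∑ y : Fin d, A x x * B y y * b := by
          rw [Matrix.trace, Matrix.trace, Fintype.sum_mul_sum, Finset.sum_mul]
          exact Finset.sum_congr rfl fun x _ => by rw [Finset.sum_mul]; rfl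
        have t2 : ((A * B).trace) * b = ∑ x : Fin d, ∑ y : Fin d, A x y * B y x * b := by
          simp only [Matrix.trace, Matrix.diag, Matrix.mul_apply, Finset.sum_mul]
        rw [add_mul, t1, t2]
    _ = (A.trace * B.trace + (A * B).trace) / ((d : ℂ) * ((d : ℂ) + 1)) := by
        rw [hb, div_eq_mul_inv]

end
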